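/- Let α ∈ 𝕋 be non-periodic under the doubling map. For any two distinct finite words u₁, u₂ ∈ {L,R}^*, the chord of the pair (ũ₁(⋆₁), ũ₁(⋆₂)) and the chord of the pair (ũ₂(⋆₁), ũ₂(⋆₂)) are disjoint as closed segments in ℂ. -/

import Mathlib

open Set MeasureTheory Filter
open scoped Classical

noncomputable section

/-- The circle `ℝ/ℤ`. -/
abbrev 𝕋 := AddCircle (1 : ℝ)

/-- The doubling map `h(x) = 2x` on the circle. -/
def dbl (x : 𝕋) : 𝕋 := x + x

/-- The representative of a point of the circle lying in `[0,1)`. -/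
def rep (x : 𝕋) : ℝ := (AddCircle.equivIco 1 0 x : ℝ)

/-- `⋆₁ = α/2`. -/
def star1 (α : 𝕋) : 𝕋 := ((rep α / 2 : ℝ) : 𝕋)

/-- `⋆₂ = α/2 + 1/2`. -/
def star2 (α : 𝕋) : 𝕋 := ((rep α / 2 + 1 / 2 : ℝ) : 𝕋)

/-- The closed semicircle `C(L) = {α/2 + t : t ∈ [0,1/2]}`. -/
def arcL (α : 𝕋) : Set 𝕋 := (fun t : ℝ => ((rep α / 2 + t : ℝ) : 𝕋)) '' Set.Icc 0 (1 / 2)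

/-- The closed semicircle `C(R) = {α/2 + 1/2 + t : t ∈ [0,1/2]}`. -/
def arcR (α : 𝕋) : Set 𝕋 :=
  (fun t : ℝ => ((rep α / 2 + 1 / 2 + t : ℝ) : 𝕋)) '' Set.Icc 0 (1 / 2)

/-- The open semicircle `{α/2 + t : t ∈ (0,1/2)}`. -/
def openArcL (α : 𝕋) : Set 𝕋 := (fun t : ℝ => ((rep α / 2 + t : ℝ) : 𝕋)) '' Set.Ioo 0 (1 / 2)

/-- The open semicircle `{α/2 + 1/2 + t : t ∈ (0,1/2)}`. -/
def openArcR (α : 𝕋) : Set 𝕋 :=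
  (fun t : ℝ => ((rep α / 2 + 1 / 2 + t : ℝ) : 𝕋)) '' Set.Ioo 0 (1 / 2)

/-- The alphabet `{L, R, ⋆}`. -/
inductive Letter | L | R | star
deriving DecidableEq

/-- `itin α x n` is the `(n+1)`-st letter of the itinerary `I^α(x)`. -/
def itin (α x : 𝕋) (n : ℕ) : Letter :=
  if dbl^[n] x = star1 α ∨ dbl^[n] x = star2 α then Letter.star
  else if dbl^[n] x ∈ openArcL α then Letter.L else Letter.R

/-- The lamination `x ≈_α y`. -/
def approx (α : 𝕋) (x y : 𝕋) : Prop :=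
  ∀ n : ℕ, itin α x n = itin α y n ∨ itin α x n = Letter.star ∨ itin α y n = Letter.star

/-- A point is periodic under the doubling map. -/
def IsPeriodicPt' (x : 𝕋) : Prop := ∃ k : ℕ, 1 ≤ k ∧ dbl^[k] x = x

/-- `α` is periodic under the doubling map. -/
def Periodic' (α : 𝕋) : Prop := IsPeriodicPt' α

/-- `α` is pre-periodic under the doubling map. -/
def PrePeriodic (α : 𝕋) : Prop := ∃ m : ℕ, IsPeriodicPt' (dbl^[m] α)

/-- `D` is a gluing link with `n` arcs with respect to `≈_α`: a disjoint union of `n` closed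
arcs whose `2n` endpoints occur in counterclockwise cyclic order and are consecutively glued
by `≈_α`. -/
def IsGluingLink (α : 𝕋) (n : ℕ) (D : Set 𝕋) : Prop :=
  0 < n ∧ ∃ s e : ℕ → ℝ,
    (∀ i < n, s i ≤ e i) ∧
    (∀ i j : ℕ, i < j → j < n → e i < s j) ∧
    (∀ i < n, ∀ j < n, e j < s i + 1) ∧
    D = ⋃ i ∈ Finset.range n, (fun t : ℝ => (t : 𝕋)) '' Set.Icc (s i) (e i) ∧
    (∀ i < n, approx α ((e i : ℝ) : 𝕋) ((s ((i + 1) % n) : ℝ) : 𝕋))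

/-- `L̃(x)`: the `h`-preimage of `x` in the interior of `C(L)` (for `x ≠ α`). -/
def tldL (α x : 𝕋) : 𝕋 :=
  if ((rep x / 2 : ℝ) : 𝕋) ∈ openArcL α then ((rep x / 2 : ℝ) : 𝕋)
  else ((rep x / 2 + 1 / 2 : ℝ) : 𝕋)

/-- `R̃(x)`: the `h`-preimage of `x` in the interior of `C(R)` (for `x ≠ α`). -/
def tldR (α x : 𝕋) : 𝕋 :=
  if ((rep x / 2 : ℝ) : 𝕋) ∈ openArcR α then ((rep x / 2 : ℝ) : 𝕋)
  else ((rep x / 2 + 1 / 2 : ℝ) : 𝕋)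

/-- The inverse branch associated with a single letter of `{L,R}`
(`true` codes `L`, `false` codes `R`). -/
def tldB (α : 𝕋) (b : Bool) (x : 𝕋) : 𝕋 := if b then tldL α x else tldR α x

/-- `g̃ = g̃[1] ∘ ⋯ ∘ g̃[n]` for a word `g ∈ {L,R}^*`. -/
def wtld (α : 𝕋) (g : List Bool) (x : 𝕋) : 𝕋 := g.foldr (fun b y => tldB α b y) x

/-- The embedding `e(θ) = exp(2πiθ)` of the circle into `ℂ`. -/
def emb (x : 𝕋) : ℂ := Complex.exp (2 * Real.pi * Complex.I * (rep x))

/-- The chord of a pair of points of the circle: the closed Euclidean segment joining their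
images in `ℂ`. -/
def chord (a b : 𝕋) : Set ℂ := segment ℝ (emb a) (emb b)

/-- The union of all chords `l_g` for words `g ∈ {L,R}^n`. -/
def chordsUnion (α : 𝕋) (n : ℕ) : Set ℂ :=
  ⋃ g ∈ {g : List Bool | g.length = n},
    chord (wtld α g (star1 α)) (wtld α g (star2 α))

/-- The closed unit disk minus the chords of level `n`. -/
def diskMinus (α : 𝕋) (n : ℕ) : Set ℂ := Metric.closedBall (0 : ℂ) 1 \ chordsUnion α n

/-- `C` is a generalized cylinder set of degree `n`: the trace on the circle of the closure of
a connected component of the closed unit disk minus the chords of level `n`. -/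
def IsGCS (α : 𝕋) (n : ℕ) (C : Set 𝕋) : Prop :=
  ∃ z ∈ diskMinus α n,
    C = {x : 𝕋 | emb x ∈ closure (connectedComponentIn (diskMinus α n) z)}

/-- The closed region of the circle associated with a letter (`⋆` imposes no restriction). -/
def semi (α : 𝕋) : Letter → Set 𝕋
  | Letter.L => arcL α
  | Letter.R => arcR α
  | Letter.star => Set.univ

/-- `C(u)` for a word `u ∈ {L,R,⋆}^m`. -/
def cylSet (α : 𝕋) (u : List Letter) : Set 𝕋 :=
  {x : 𝕋 | ∀ i < u.length, dbl^[i] x ∈ semi α (u.getD i Letter.star)}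

/-- The digit sequence of `I(α) = I^α(α)` (0-indexed: `ia α n` is the `(n+1)`-st digit). -/
def ia (α : 𝕋) (n : ℕ) : Letter := itin α α n

/-- A set `ℛ ⊆ ℕ` of indices is `D`-rare. -/
def DRare (D : ℕ) (R : Finset ℕ) : Prop :=
  ∀ i : ℕ, (R.filter (fun j => i ≤ j ∧ j ≤ i + D)).card ≤ 3

/-- The `i`-th digit (1-based) of `I(α)[1..n]` is `(D,ℛ)`-duplicating. -/
def DupDigit (α : 𝕋) (D : ℕ) (R : Finset ℕ) (n i : ℕ) : Prop :=
  ∃ a b : ℕ, 1 ≤ a ∧ a ≤ i ∧ i ≤ b ∧ b ≤ n ∧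
    (∀ j, a ≤ j → j ≤ b → j ∉ R → ia α (j - 1) = ia α (j - a)) ∧
    (b = n ∨ D < b - a + 1)


/-- `α` is strongly recurrent. -/
def StronglyRecurrent (α : 𝕋) : Prop :=
  ∀ D : ℕ, 0 < D → ∀ τ : ℝ, τ < 1 →
    ∃ n : ℕ, D < n ∧ ∃ R : Finset ℕ, R ⊆ Finset.Icc 1 n ∧ DRare D R ∧
      τ * n < ((Finset.Icc 1 n).filter (fun i => DupDigit α D R n i)).card

/-- `α` is weakly pre-periodic with period `k`. -/
def WeaklyPrePeriodicWith (α : 𝕋) (k : ℕ) : Prop :=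
  1 ≤ k ∧ ∃ m : ℕ, 1 ≤ m ∧ ∃ X : Letter, (X = Letter.L ∨ X = Letter.R) ∧
    ∀ n : ℕ, ia α (m + k * n - 1) = X

/-- `α` is weakly pre-periodic (for some period). -/
def WeaklyPrePeriodic (α : 𝕋) : Prop := ∃ k : ℕ, WeaklyPrePeriodicWith α k

end

/-!
Measure positions on the circle from `α`. Away from `α`, each inverse branch `L̃`, `R̃` is then a
halving followed by a rotation, so it preserves the cyclic order and sends everything into the open
semicircle between `⋆₁` and `⋆₂` on its own side; non-periodicity of `α` guarantees that no point
`g̃(⋆ᵢ)` is ever `α`. By induction on the words, the endpoints of the chords of two distinct words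
never interleave: if the words start with different letters the two chords lie over opposite
semicircles, and if they start with the same letter the configuration is the image of the one for
the tails. Finally, non-interleaved chords are disjoint because the line through one of them
separates it from the other.
-/

open Set

lemma coe_rep (x : 𝕋) : ((rep x : ℝ) : 𝕋) = x := (AddCircle.equivIco 1 0).symm_apply_apply x

lemma rep_coe (r : ℝ) : rep (r : 𝕋) = Int.fract r := by
  simp [rep, AddCircle.coe_equivIco_mk_apply]

lemma rep_mem_Ico (x : 𝕋) : rep x ∈ Ico (0 : ℝ) 1 := by
  simpa [rep] using (AddCircle.equivIco 1 0 x).2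

lemma rep_injective : Function.Injective rep := fun x y h => by
  rw [← coe_rep x, ← coe_rep y, h]

lemma rep_pos_of_ne_zero {x : 𝕋} (hx : x ≠ 0) : 0 < rep x := by
  refine (rep_mem_Ico x).1.lt_of_ne fun h => hx ?_
  rw [← coe_rep x, ← h, QuotientAddGroup.mk_zero]

lemma fract_sub_of_mem_Ico {u v : ℝ} (hu : u ∈ Ico (0 : ℝ) 1) (hv : v ∈ Ico (0 : ℝ) 1) :
    Int.fract (v - u) = if u ≤ v then v - u else v - u + 1 := by
  rw [Int.fract_eq_iff]
  split_ifs with h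
  · exact ⟨by linarith, by linarith [hv.2, hu.1], 0, by simp⟩
  · exact ⟨by linarith [hv.1, hu.2], by linarith, -1, by simp⟩

/-- `ArcBtw x y z`: the point `y` lies on the open arc running counterclockwise from `x` to `z`. -/
def ArcBtw (x y z : 𝕋) : Prop := 0 < rep (y - x) ∧ rep (y - x) < rep (z - x)

lemma arcBtw_add_left_iff (c : 𝕋) {x y z : 𝕋} : ArcBtw (c + x) (c + y) (c + z) ↔ ArcBtw x y z := by
  simp only [ArcBtw, add_sub_add_left_eq_sub]

lemma arcBtw_coe_iff {u v w : ℝ} (hu : u ∈ Ico (0 : ℝ) 1) (hv : v ∈ Ico (0 : ℝ) 1)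
    (hw : w ∈ Ico (0 : ℝ) 1) :
    ArcBtw u v w ↔ (u < v ∧ v < w) ∨ (v < w ∧ w < u) ∨ (w < u ∧ u < v) := by
  simp only [ArcBtw, ← QuotientAddGroup.mk_sub, rep_coe, fract_sub_of_mem_Ico hu hv,
    fract_sub_of_mem_Ico hu hw]
  split_ifs <;> grind

lemma arcBtw_iff (x y z : 𝕋) :
    ArcBtw x y z ↔ (rep x < rep y ∧ rep y < rep z) ∨ (rep y < rep z ∧ rep z < rep x) ∨
      (rep z < rep x ∧ rep x < rep y) := by
  simpa only [coe_rep] using arcBtw_coe_iff (rep_mem_Ico x) (rep_mem_Ico y) (rep_mem_Ico z)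

lemma ArcBtw.half {x y z : 𝕋} (h : ArcBtw x y z) :
    ArcBtw ((rep x / 2 : ℝ) : 𝕋) ((rep y / 2 : ℝ) : 𝕋) ((rep z / 2 : ℝ) : 𝕋) := by
  have half_mem (x : 𝕋) : rep x / 2 ∈ Ico (0 : ℝ) 1 := by
    have := rep_mem_Ico x; constructor <;> linarith [this.1, this.2]
  rw [arcBtw_coe_iff (half_mem x) (half_mem y) (half_mem z)]
  simpa only [div_lt_div_iff_of_pos_right (two_pos : (0 : ℝ) < 2)] using (arcBtw_iff x y z).1 h

/-- `x` and `y` lie in the same component of the circle minus `{p, q}`. -/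
def Unlinked (p q x y : 𝕋) : Prop :=
  (ArcBtw p x q ∧ ArcBtw p y q) ∨ (ArcBtw q x p ∧ ArcBtw q y p)

lemma Unlinked.symm {p q x y : 𝕋} (h : Unlinked p q x y) (hxy : x ≠ y) : Unlinked x y p q := by
  have := rep_injective.ne hxy
  simp only [Unlinked, arcBtw_iff] at h ⊢
  grind

lemma unlinked_of_arcBtw {u v p q x y : 𝕋} (hp : ArcBtw u p v) (hq : ArcBtw u q v)
    (hx : ArcBtw v x u) (hy : ArcBtw v y u) (hpq : p ≠ q) : Unlinked p q x y := by
  have := rep_injective.ne hpq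
  simp only [Unlinked, arcBtw_iff] at hp hq hx hy ⊢
  grind

lemma emb_eq_toCircle (x : 𝕋) : emb x = AddCircle.toCircle x := by
  conv_rhs => rw [← coe_rep x]
  rw [AddCircle.toCircle_apply_mk, Circle.coe_exp, emb]
  congr 1
  push_cast
  ring

lemma re_emb_mul_toCircle (a : 𝕋) (s c : ℝ) :
    (emb (a + (s : 𝕋)) * AddCircle.toCircle (-(a + (c : 𝕋)))).re =
      Real.cos (2 * Real.pi * (s - c)) := by
  rw [emb_eq_toCircle, ← Circle.coe_mul, ← AddCircle.toCircle_add,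
    show a + (s : 𝕋) + -(a + (c : 𝕋)) = ((s - c : ℝ) : 𝕋) by
      simp only [QuotientAddGroup.mk_sub]; abel,
    AddCircle.toCircle_apply_mk, Circle.coe_exp, Complex.exp_ofReal_mul_I_re]
  ring_nf

lemma add_coe_rep_sub (a x : 𝕋) : a + ((rep (x - a) : ℝ) : 𝕋) = x := by
  rw [coe_rep, add_sub_cancel]

/-- After rotating the midpoint of the arc from `a` to `b` (of length `δ`) to `1`, the real part
equals `cos (π δ)` at `a` and `b` and exceeds it strictly inside the arc, so the line through
`emb a` and `emb b` separates the two chords. -/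
lemma disjoint_chord_of_arcBtw {a b x y : 𝕋} (hx : ArcBtw a x b) (hy : ArcBtw a y b) :
    Disjoint (chord a b) (chord x y) := by
  set δ := rep (b - a)
  let f : ℂ →ₗ[ℝ] ℝ :=
    Complex.reLm ∘ₗ LinearMap.mulRight ℝ (AddCircle.toCircle (-(a + ((δ / 2 : ℝ) : 𝕋))) : ℂ)
  have hf (s : ℝ) : f (emb (a + (s : 𝕋))) = Real.cos (2 * Real.pi * (s - δ / 2)) :=
    re_emb_mul_toCircle a s (δ / 2)
  have hδ : δ < 1 := (rep_mem_Ico _).2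
  have ha : f (emb a) = Real.cos (Real.pi * δ) := by
    have := hf 0
    rw [QuotientAddGroup.mk_zero, add_zero] at this
    rw [this, ← Real.cos_neg]; ring_nf
  have hb : f (emb b) = Real.cos (Real.pi * δ) := by
    conv_lhs => rw [← add_coe_rep_sub a b]
    rw [hf]
    change Real.cos (2 * Real.pi * (δ - δ / 2)) = _
    ring_nf
  have h_inner {x : 𝕋} (hx : ArcBtw a x b) : Real.cos (Real.pi * δ) < f (emb x) := by
    obtain ⟨h0, h1⟩ := hx
    rw [← add_coe_rep_sub a x, hf, ← Real.cos_abs (2 * Real.pi * _)]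
    refine Real.cos_lt_cos_of_nonneg_of_le_pi (abs_nonneg _) ?_ ?_
    · nlinarith [Real.pi_pos]
    · rw [abs_lt]; constructor <;> nlinarith [Real.pi_pos]
  rw [Set.disjoint_left]
  intro z hz hz'
  have h_le := (convex_halfSpace_le f.isLinear _).segment_subset ha.le hb.le hz
  have h_gt := (convex_halfSpace_gt f.isLinear _).segment_subset (h_inner hx) (h_inner hy) hz'
  exact (lt_of_lt_of_le (b := f z) h_gt h_le).false

lemma Unlinked.disjoint_chord {p q x y : 𝕋} (h : Unlinked p q x y) :
    Disjoint (chord p q) (chord x y) := by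
  rcases h with ⟨hx, hy⟩ | ⟨hx, hy⟩
  · exact disjoint_chord_of_arcBtw hx hy
  · rw [chord, segment_symm]
    exact disjoint_chord_of_arcBtw hx hy

lemma coe_ne_zero_of_mem_Ioo {r : ℝ} (hr : r ∈ Ioo (0 : ℝ) 1) : (r : 𝕋) ≠ 0 := by
  rw [Ne, AddCircle.coe_eq_zero_iff_of_mem_Ico ⟨hr.1.le, hr.2⟩]
  exact hr.1.ne'

lemma coe_half_add_coe_half : ((1 / 2 : ℝ) : 𝕋) + ((1 / 2 : ℝ) : 𝕋) = 0 := by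
  rw [← QuotientAddGroup.mk_add, add_halves, AddCircle.coe_period]

lemma dbl_coe (r : ℝ) : dbl (r : 𝕋) = ((2 * r : ℝ) : 𝕋) := by
  rw [dbl, ← QuotientAddGroup.mk_add, two_mul]

lemma eq_or_eq_add_half_of_dbl_eq {y z : 𝕋} (h : dbl y = dbl z) :
    y = z ∨ y = z + ((1 / 2 : ℝ) : 𝕋) := by
  have h2 : 2 • (y - z) = 0 := by
    rw [two_nsmul, sub_add_sub_comm, sub_eq_zero]
    exact h
  obtain ⟨m, hm, hyz⟩ := (AddCircle.nsmul_eq_zero_iff two_pos).1 h2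
  interval_cases m
  · left
    simpa [sub_eq_zero, eq_comm] using hyz
  · right
    rw [← sub_eq_iff_eq_add', ← hyz]
    norm_num

lemma dbl_coe_rep_half (x : 𝕋) : dbl ((rep x / 2 : ℝ) : 𝕋) = x := by
  rw [dbl_coe, mul_div_cancel₀ _ two_ne_zero, coe_rep]

lemma dbl_coe_rep_half_add_half (x : 𝕋) : dbl ((rep x / 2 + 1 / 2 : ℝ) : 𝕋) = x := by
  rw [dbl_coe, mul_add, mul_div_cancel₀ _ two_ne_zero, mul_one_div_cancel two_ne_zero,
    QuotientAddGroup.mk_add, AddCircle.coe_period, add_zero, coe_rep]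

lemma dbl_tldB (α : 𝕋) (b : Bool) (x : 𝕋) : dbl (tldB α b x) = x := by
  cases b <;> simp only [tldB, tldL, tldR, Bool.false_eq_true, if_false, if_true] <;> split_ifs <;>
    simp only [dbl_coe_rep_half, dbl_coe_rep_half_add_half]

lemma dbl_iterate_wtld (α : 𝕋) (g : List Bool) (x : 𝕋) : dbl^[g.length] (wtld α g x) = x := by
  induction g with
  | nil => rfl
  | cons b g ih =>
    rw [List.length_cons, Function.iterate_succ_apply]
    exact (congrArg _ (dbl_tldB α b _)).trans ih

/-- `openArcL α` and `openArcR α` are, by definition, `halfArc (rep α / 2)` and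
`halfArc (rep α / 2 + 1 / 2)`. -/
def halfArc (c : ℝ) : Set 𝕋 := (fun t : ℝ => ((c + t : ℝ) : 𝕋)) '' Ioo 0 (1 / 2)

lemma add_half_not_mem_halfArc {c : ℝ} {y : 𝕋} (hy : y ∈ halfArc c) :
    y + ((1 / 2 : ℝ) : 𝕋) ∉ halfArc c := by
  obtain ⟨τ, hτ, rfl⟩ := hy
  rintro ⟨τ', hτ', h⟩
  refine coe_ne_zero_of_mem_Ioo (r := τ - τ' + 1 / 2)
    ⟨by linarith [hτ.1, hτ'.2], by linarith [hτ.2, hτ'.1]⟩ ?_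
  simp only at h
  rw [show τ - τ' + 1 / 2 = (c + τ + 1 / 2) - (c + τ') by ring, QuotientAddGroup.mk_sub,
    show ((c + τ + 1 / 2 : ℝ) : 𝕋) = ((c + τ : ℝ) : 𝕋) + ((1 / 2 : ℝ) : 𝕋) from rfl, ← h, sub_self]

/-- The shape of `tldL` and `tldR` (with `S = openArcL α`, resp. `openArcR α`): the two preimages
of `x` differ by `1/2`, so `S` contains at most one of them. -/
lemma ite_preimage_eq {S : Set 𝕋} (hS : ∀ y ∈ S, y + ((1 / 2 : ℝ) : 𝕋) ∉ S) {x y : 𝕋}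
    (hy : y ∈ S) (hxy : dbl y = x) :
    (if ((rep x / 2 : ℝ) : 𝕋) ∈ S then ((rep x / 2 : ℝ) : 𝕋) else ((rep x / 2 + 1 / 2 : ℝ) : 𝕋))
      = y := by
  rcases eq_or_eq_add_half_of_dbl_eq (hxy.trans (dbl_coe_rep_half x).symm) with rfl | rfl
  · rw [if_pos hy]
  · rw [if_neg (fun h => hS _ h hy), QuotientAddGroup.mk_add]

noncomputable def starPt (α : 𝕋) : Bool → 𝕋
  | true => star1 α
  | false => star2 α

lemma starPt_not (α : 𝕋) (b : Bool) : starPt α (!b) = starPt α b + ((1 / 2 : ℝ) : 𝕋) := by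
  cases b
  · rw [Bool.not_false, starPt, starPt, star2, QuotientAddGroup.mk_add, add_assoc,
      coe_half_add_coe_half, add_zero, star1]
  · rw [Bool.not_true, starPt, starPt, star2, QuotientAddGroup.mk_add, star1]

lemma dbl_starPt (α : 𝕋) (b : Bool) : dbl (starPt α b) = α := by
  cases b
  · exact dbl_coe_rep_half_add_half α
  · exact dbl_coe_rep_half α

lemma dbl_add (x y : 𝕋) : dbl (x + y) = dbl x + dbl y := add_add_add_comm x y x y

lemma rep_sub_mem_Ioo {x α : 𝕋} (hx : x ≠ α) : rep (x - α) ∈ Ioo (0 : ℝ) 1 :=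
  ⟨rep_pos_of_ne_zero (sub_ne_zero.2 hx), (rep_mem_Ico _).2⟩

lemma tldB_eq {α x : 𝕋} (hx : x ≠ α) (b : Bool) :
    tldB α b x = starPt α b + ((rep (x - α) / 2 : ℝ) : 𝕋) := by
  have ht := rep_sub_mem_Ioo hx
  have hdbl : dbl (starPt α b + ((rep (x - α) / 2 : ℝ) : 𝕋)) = x := by
    rw [dbl_add, dbl_starPt, dbl_coe, mul_div_cancel₀ _ two_ne_zero, coe_rep, add_sub_cancel]
  have hτ : rep (x - α) / 2 ∈ Ioo (0 : ℝ) (1 / 2) := ⟨by linarith [ht.1], by linarith [ht.2]⟩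
  cases b
  · exact ite_preimage_eq (fun _ => add_half_not_mem_halfArc) ⟨_, hτ, by
      simp only [starPt, star2, QuotientAddGroup.mk_add]⟩ hdbl
  · exact ite_preimage_eq (fun _ => add_half_not_mem_halfArc) ⟨_, hτ, by
      simp only [starPt, star1, QuotientAddGroup.mk_add]⟩ hdbl

lemma arcBtw_starPt_tldB {α x : 𝕋} (hx : x ≠ α) (b : Bool) :
    ArcBtw (starPt α b) (tldB α b x) (starPt α !b) := by
  have ht := rep_sub_mem_Ioo hx
  have h0 : ArcBtw ((0 : ℝ) : 𝕋) ((rep (x - α) / 2 : ℝ) : 𝕋) ((1 / 2 : ℝ) : 𝕋) := by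
    rw [arcBtw_coe_iff (by norm_num) ⟨by linarith [ht.1], by linarith [ht.2]⟩ (by norm_num)]
    exact Or.inl ⟨by linarith [ht.1], by linarith [ht.2]⟩
  simpa only [tldB_eq hx, starPt_not, QuotientAddGroup.mk_zero, add_zero] using
    (arcBtw_add_left_iff (starPt α b)).2 h0

lemma ArcBtw.tldB {α x y z : 𝕋} (hx : x ≠ α) (hy : y ≠ α) (hz : z ≠ α) (h : ArcBtw x y z)
    (b : Bool) : ArcBtw (tldB α b x) (tldB α b y) (tldB α b z) := by
  rw [tldB_eq hx, tldB_eq hy, tldB_eq hz, arcBtw_add_left_iff]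
  have h' := (arcBtw_add_left_iff (-α)).2 h
  simp only [neg_add_eq_sub] at h'
  exact h'.half

lemma Unlinked.tldB {α p q x y : 𝕋} (hp : p ≠ α) (hq : q ≠ α) (hx : x ≠ α) (hy : y ≠ α)
    (h : Unlinked p q x y) (b : Bool) :
    Unlinked (tldB α b p) (tldB α b q) (tldB α b x) (tldB α b y) := by
  rcases h with ⟨h₁, h₂⟩ | ⟨h₁, h₂⟩
  · exact Or.inl ⟨h₁.tldB hp hx hq b, h₂.tldB hp hy hq b⟩
  · exact Or.inr ⟨h₁.tldB hq hx hp b, h₂.tldB hq hy hp b⟩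

lemma unlinked_star_tldB {α x y : 𝕋} (hx : x ≠ α) (hy : y ≠ α) (b : Bool) :
    Unlinked (star1 α) (star2 α) (tldB α b x) (tldB α b y) := by
  cases b
  · exact Or.inr ⟨arcBtw_starPt_tldB hx false, arcBtw_starPt_tldB hy false⟩
  · exact Or.inl ⟨arcBtw_starPt_tldB hx true, arcBtw_starPt_tldB hy true⟩

lemma unlinked_tldB_of_ne {α p q x y : 𝕋} (hp : p ≠ α) (hq : q ≠ α) (hx : x ≠ α) (hy : y ≠ α)
    {b b' : Bool} (hb : b ≠ b') (hpq : tldB α b p ≠ tldB α b q) :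
    Unlinked (tldB α b p) (tldB α b q) (tldB α b' x) (tldB α b' y) := by
  obtain rfl : b' = !b := by cases b <;> cases b' <;> simp_all
  refine unlinked_of_arcBtw (arcBtw_starPt_tldB hp b) (arcBtw_starPt_tldB hq b) ?_ ?_ hpq
  · simpa only [Bool.not_not] using arcBtw_starPt_tldB hx (!b)
  · simpa only [Bool.not_not] using arcBtw_starPt_tldB hy (!b)

lemma wtld_ne_of_dbl_eq {α x : 𝕋} (hα : ¬ Periodic' α) (hx : dbl x = α) (g : List Bool) :
    wtld α g x ≠ α := by
  intro h
  have h_iter := dbl_iterate_wtld α g x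
  rw [h] at h_iter
  exact hα ⟨g.length + 1, by omega, by rw [Function.iterate_succ_apply', h_iter, hx]⟩

lemma wtld_star1_ne_wtld_star2 (α : 𝕋) (g : List Bool) :
    wtld α g (star1 α) ≠ wtld α g (star2 α) := by
  intro h
  have h₂ := congrArg dbl^[g.length] h
  rw [dbl_iterate_wtld, dbl_iterate_wtld] at h₂
  have h_half := starPt_not α true
  rw [Bool.not_true, starPt, starPt, ← h₂] at h_half
  exact coe_ne_zero_of_mem_Ioo (r := 1 / 2) (by norm_num) (left_eq_add.1 h_half)

theorem unlinked_wtld {α : 𝕋} (hα : ¬ Periodic' α) {u₁ u₂ : List Bool} (h : u₁ ≠ u₂) :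
    Unlinked (wtld α u₁ (star1 α)) (wtld α u₁ (star2 α)) (wtld α u₂ (star1 α))
      (wtld α u₂ (star2 α)) := by
  have ne₁ (g : List Bool) : wtld α g (star1 α) ≠ α := wtld_ne_of_dbl_eq hα (dbl_starPt α true) g
  have ne₂ (g : List Bool) : wtld α g (star2 α) ≠ α := wtld_ne_of_dbl_eq hα (dbl_starPt α false) g
  induction u₁ generalizing u₂ with
  | nil =>
    obtain _ | ⟨b, g⟩ := u₂
    · exact absurd rfl h
    · exact unlinked_star_tldB (ne₁ g) (ne₂ g) b
  | cons b g ih =>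
    obtain _ | ⟨b', g'⟩ := u₂
    · exact (unlinked_star_tldB (ne₁ g) (ne₂ g) b).symm (wtld_star1_ne_wtld_star2 α (b :: g))
    · by_cases hb : b = b'
      · subst hb
        exact (ih (fun h' => h (congrArg _ h'))).tldB (ne₁ g) (ne₂ g) (ne₁ g') (ne₂ g') b
      · exact unlinked_tldB_of_ne (ne₁ g) (ne₂ g) (ne₁ g') (ne₂ g') hb
          (wtld_star1_ne_wtld_star2 α (b :: g))

/-- for distinct finite words `u₁ ≠ u₂` over `{L,R}` (coded by `List Bool`),
the chords of `(ũ₁(⋆₁), ũ₁(⋆₂))` and `(ũ₂(⋆₁), ũ₂(⋆₂))` are disjoint. -/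
theorem stmt_8 (α : 𝕋) (hα : ¬ Periodic' α) (u₁ u₂ : List Bool) (h : u₁ ≠ u₂) :
    Disjoint (chord (wtld α u₁ (star1 α)) (wtld α u₁ (star2 α)))
      (chord (wtld α u₂ (star1 α)) (wtld α u₂ (star2 α))) :=
  (unlinked_wtld hα h).disjoint_chord
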